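/- For every n ≥ 4 and every natural number a, there exists an n-color fair game having a as one of its coordinates. In fact, writing S = (n−3)a and N = (n−3)a^2, the n-tuple (4(S^2 + N) + 3S + 1, S^2 + N, S^2 + N, a, a, …, a) (with a repeated n−3 times) is such a fair game. Hence C_n = ℕ for all n ≥ 4. -/

import Mathlib

/-!
Expanding the square of the sum gives `F x = 2 Σ xᵢ² - (Σ xᵢ)² - Σ xᵢ`. Prepending
`(4M + 3S + 1, M, M)`, where `M = S² + N`, to any tail with sum `S` and sum of squares `N` makes
this vanish identically in `S` and `N`; the constant tail `(a, …, a)` of length `n - 3` gives the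
required game.
-/

open Finset

def F {n : ℕ} (x : Fin n → ℤ) : ℤ :=
  (∑ i, x i) ^ 2 - (∑ i, x i) - 4 * ∑ i, ∑ j, if i < j then x i * x j else 0

theorem sq_sum_eq_sum_sq_add_two_mul_sum_lt {ι R : Type*} [Fintype ι] [LinearOrder ι]
    [CommRing R] (x : ι → R) :
    (∑ i, x i) ^ 2 = ∑ i, x i ^ 2 + 2 * ∑ i, ∑ j, if i < j then x i * x j else 0 := by
  have split (i j : ι) : x i * x j = ((if i < j then x i * x j else 0) +
      if j < i then x j * x i else 0) + if i = j then x i * x j else 0 := by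
    rcases lt_trichotomy i j with h | rfl | h
    · simp [h, h.ne, h.not_gt]
    · simp
    · simp [h, h.ne', h.not_gt, mul_comm]
  rw [sq, sum_mul_sum, sum_congr rfl fun i _ => sum_congr rfl fun j _ => split i j]
  simp only [sum_add_distrib, sum_ite_eq, mem_univ, if_true, ← sq]
  rw [sum_comm (f := fun i j => if j < i then x j * x i else 0)]
  ring

theorem F_eq_two_mul_sum_sq_sub {n : ℕ} (x : Fin n → ℤ) :
    F x = 2 * ∑ i, x i ^ 2 - (∑ i, x i) ^ 2 - ∑ i, x i := by
  rw [F]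
  linear_combination 2 * sq_sum_eq_sum_sq_add_two_mul_sum_lt x

theorem F_append_eq_zero {m : ℕ} (y : Fin m → ℤ) {S N : ℤ} (hS : ∑ i, y i = S)
    (hN : ∑ i, y i ^ 2 = N) :
    F (Fin.append ![4 * (S ^ 2 + N) + 3 * S + 1, S ^ 2 + N, S ^ 2 + N] y) = 0 := by
  simp only [F_eq_two_mul_sum_sq_sub, Fin.sum_univ_add, Fin.append_left, Fin.append_right,
    Fin.sum_univ_three, hS, hN, Matrix.cons_val]
  ring

/-- For `n ≥ 4` (`n = 3 + (d+1)`), writing `S = (n−3)a` and `N = (n−3)a²`, the tuple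
`(4(S²+N)+3S+1, S²+N, S²+N, a, …, a)` is an `n`-color fair game with `a` as a
coordinate; hence `C_n = ℕ` for every `n ≥ 4`. -/
theorem stmt_10 :
    (∀ (d : ℕ) (a : ℕ),
      let S : ℤ := (d + 1 : ℕ) * a
      let N : ℤ := (d + 1 : ℕ) * (a : ℤ) ^ 2
      let x : Fin (3 + (d + 1)) → ℤ :=
        Fin.append ![4 * (S ^ 2 + N) + 3 * S + 1, S ^ 2 + N, S ^ 2 + N]
          (fun _ : Fin (d + 1) => (a : ℤ))
      F x = 0 ∧ (∀ i, 0 ≤ x i) ∧ ∃ i, x i = (a : ℤ)) ∧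
    (∀ n : ℕ, 4 ≤ n → ∀ a : ℕ,
      ∃ x : Fin n → ℤ, F x = 0 ∧ (∀ i, 0 ≤ x i) ∧ ∃ i, x i = (a : ℤ)) := by
  refine (fun game => ⟨game, fun n hn a => ?reindex⟩) fun d a => ?construction
  case construction =>
    intro S N x
    refine ⟨F_append_eq_zero _ (by simp [S]) (by simp [N]), Fin.addCases ?_ (by simp [x]),
      Fin.natAdd 3 0, Fin.append_right _ _ _⟩
    simp [x, Fin.forall_fin_succ]
    constructor <;> positivity
  case reindex =>
    obtain ⟨d, rfl⟩ : ∃ d, n = 3 + (d + 1) := ⟨n - 4, by omega⟩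
    exact ⟨_, game d a⟩
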